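/- Let ψ_1, ψ_2 : ℝ^2 → ℂ and A_1, A_2 : ℝ^2 → ℝ be smooth satisfying the compatibility condition D_1 ψ_2 = D_2 ψ_1 and the curvature relation F_{12} = μ Im(conj(ψ_2) ψ_1) (i.e. (D_1 D_2 − D_2 D_1)f = i F_{12} f). Then pointwise: Im(conj(D_1 ψ_2) D_1 ψ_1) = (1/2)( ∂_1 Im(conj(D_2 ψ_1) ψ_1) − ∂_2 Im(conj(D_1 ψ_1) ψ_1) + F_{12} |ψ_1|^2 ). -/

import Mathlib

noncomputable section
open Complex MeasureTheory Filter

/-- Partial derivative in the `x¹` direction on `ℝ × ℝ`. -/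
def q1 {E : Type*} [NormedAddCommGroup E] [NormedSpace ℝ E]
    (f : ℝ × ℝ → E) (p : ℝ × ℝ) : E := deriv (fun s => f (s, p.2)) p.1

/-- Partial derivative in the `x²` direction on `ℝ × ℝ`. -/
def q2 {E : Type*} [NormedAddCommGroup E] [NormedSpace ℝ E]
    (f : ℝ × ℝ → E) (p : ℝ × ℝ) : E := deriv (fun s => f (p.1, s)) p.2

/-- Covariant derivative `D₁ = ∂₁ + i A₁`. -/
def Dc1 (A1 : ℝ × ℝ → ℝ) (f : ℝ × ℝ → ℂ) (p : ℝ × ℝ) : ℂ :=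
  q1 f p + Complex.I * (A1 p : ℂ) * f p

/-- Covariant derivative `D₂ = ∂₂ + i A₂`. -/
def Dc2 (A2 : ℝ × ℝ → ℝ) (f : ℝ × ℝ → ℂ) (p : ℝ × ℝ) : ℂ :=
  q2 f p + Complex.I * (A2 p : ℂ) * f p

/-- Curvature `F₁₂ = ∂₁A₂ − ∂₂A₁`. -/
def curvF (A1 A2 : ℝ × ℝ → ℝ) (p : ℝ × ℝ) : ℝ := q1 A2 p - q2 A1 p

section Aux
variable {E : Type*} [NormedAddCommGroup E] [NormedSpace ℝ E]

theorem hasDerivAt_q1 {f : ℝ × ℝ → E} {p : ℝ × ℝ} (hf : DifferentiableAt ℝ f p) :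
    HasDerivAt (fun s => f (s, p.2)) (q1 f p) p.1 := by
  have h : DifferentiableAt ℝ (fun s : ℝ => f (s, p.2)) p.1 :=
    hf.comp _ (differentiableAt_id.prodMk (differentiableAt_const _))
  unfold q1
  exact h.hasDerivAt

theorem hasDerivAt_q2 {f : ℝ × ℝ → E} {p : ℝ × ℝ} (hf : DifferentiableAt ℝ f p) :
    HasDerivAt (fun s => f (p.1, s)) (q2 f p) p.2 := by
  have h : DifferentiableAt ℝ (fun s : ℝ => f (p.1, s)) p.2 :=
    hf.comp _ ((differentiableAt_const _).prodMk differentiableAt_id)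
  unfold q2
  exact h.hasDerivAt

theorem q1_fderiv {f : ℝ × ℝ → E} {p : ℝ × ℝ} (hf : DifferentiableAt ℝ f p) :
    q1 f p = fderiv ℝ f p (1, 0) := by
  have h1 : HasDerivAt (fun s : ℝ => ((s, p.2) : ℝ × ℝ)) ((1 : ℝ), (0 : ℝ)) p.1 :=
    (hasDerivAt_id p.1).prodMk (hasDerivAt_const _ _)
  exact (hasDerivAt_q1 hf).unique (hf.hasFDerivAt.comp_hasDerivAt p.1 h1)

theorem q2_fderiv {f : ℝ × ℝ → E} {p : ℝ × ℝ} (hf : DifferentiableAt ℝ f p) :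
    q2 f p = fderiv ℝ f p (0, 1) := by
  have h1 : HasDerivAt (fun s : ℝ => ((p.1, s) : ℝ × ℝ)) ((0 : ℝ), (1 : ℝ)) p.2 :=
    (hasDerivAt_const _ _).prodMk (hasDerivAt_id p.2)
  exact (hasDerivAt_q2 hf).unique (hf.hasFDerivAt.comp_hasDerivAt p.2 h1)

theorem contDiff_q1 {f : ℝ × ℝ → E} (hf : ContDiff ℝ (⊤ : ℕ∞) f) : ContDiff ℝ (⊤ : ℕ∞) (q1 f) := by
  have h : q1 f = fun p => fderiv ℝ f p (1, 0) :=
    funext fun p => q1_fderiv (hf.differentiable (by simp) p)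
  rw [h]
  exact (hf.fderiv_right (by simp)).clm_apply contDiff_const

theorem contDiff_q2 {f : ℝ × ℝ → E} (hf : ContDiff ℝ (⊤ : ℕ∞) f) : ContDiff ℝ (⊤ : ℕ∞) (q2 f) := by
  have h : q2 f = fun p => fderiv ℝ f p (0, 1) :=
    funext fun p => q2_fderiv (hf.differentiable (by simp) p)
  rw [h]
  exact (hf.fderiv_right (by simp)).clm_apply contDiff_const

theorem q1_q2_comm {f : ℝ × ℝ → E} (hf : ContDiff ℝ (⊤ : ℕ∞) f) (p : ℝ × ℝ) :
    q1 (q2 f) p = q2 (q1 f) p := by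
  have hd : Differentiable ℝ f := hf.differentiable (by simp)
  have hdf : Differentiable ℝ (fderiv ℝ f) := (hf.fderiv_right (m := 1) (WithTop.coe_le_coe.mpr le_top)).differentiable one_ne_zero
  have hsymm : ∀ v w, fderiv ℝ (fderiv ℝ f) p v w = fderiv ℝ (fderiv ℝ f) p w v :=
    fun v w => second_derivative_symmetric (fun y => (hd y).hasFDerivAt)
      (hdf p).hasFDerivAt v w
  have e1 : q1 f = fun q => fderiv ℝ f q (1, 0) := funext fun q => q1_fderiv (hd q)
  have e2 : q2 f = fun q => fderiv ℝ f q (0, 1) := funext fun q => q2_fderiv (hd q)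
  rw [q1_fderiv ((contDiff_q2 hf).differentiable (by simp) p),
      q2_fderiv ((contDiff_q1 hf).differentiable (by simp) p), e1, e2,
      fderiv_clm_apply (hdf p) (differentiableAt_const _),
      fderiv_clm_apply (hdf p) (differentiableAt_const _)]
  simp [hsymm (1, 0) (0, 1)]
end Aux

theorem stmt9 (ψ1 ψ2 : ℝ × ℝ → ℂ) (A1 A2 : ℝ × ℝ → ℝ) (μ : ℝ)
    (hμ : μ = 1 ∨ μ = -1)
    (hψ1 : ContDiff ℝ (⊤ : ℕ∞) ψ1) (hψ2 : ContDiff ℝ (⊤ : ℕ∞) ψ2)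
    (hA1 : ContDiff ℝ (⊤ : ℕ∞) A1) (hA2 : ContDiff ℝ (⊤ : ℕ∞) A2)
    (hcomp : ∀ p, Dc1 A1 ψ2 p = Dc2 A2 ψ1 p)
    (hcurv : ∀ p, curvF A1 A2 p = μ * ((starRingEnd ℂ) (ψ2 p) * ψ1 p).im) :
    ∀ p : ℝ × ℝ,
      ((starRingEnd ℂ) (Dc1 A1 ψ2 p) * Dc1 A1 ψ1 p).im
        = (1 / 2) * ( q1 (fun q => ((starRingEnd ℂ) (Dc2 A2 ψ1 q) * ψ1 q).im) p
            - q2 (fun q => ((starRingEnd ℂ) (Dc1 A1 ψ1 q) * ψ1 q).im) p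
            + curvF A1 A2 p * Complex.normSq (ψ1 p) ) := by
  intro p
  have dψ1 : Differentiable ℝ ψ1 := hψ1.differentiable (by simp)
  have dA1 : Differentiable ℝ A1 := hA1.differentiable (by simp)
  have dA2 : Differentiable ℝ A2 := hA2.differentiable (by simp)
  have dq1ψ1 : Differentiable ℝ (q1 ψ1) := (contDiff_q1 hψ1).differentiable (by simp)
  have dq2ψ1 : Differentiable ℝ (q2 ψ1) := (contDiff_q2 hψ1).differentiable (by simp)
  -- direction 1 building blocks
  have H1ψ1 : HasDerivAt (fun s => ψ1 (s, p.2)) (q1 ψ1 p) p.1 := hasDerivAt_q1 (dψ1 p)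
  have H1q2 : HasDerivAt (fun s => q2 ψ1 (s, p.2)) (q1 (q2 ψ1) p) p.1 :=
    hasDerivAt_q1 (dq2ψ1 p)
  have H1A2 : HasDerivAt (fun s : ℝ => ((A2 (s, p.2) : ℝ) : ℂ)) ((Complex.ofReal (q1 A2 p))) p.1 :=
    (hasDerivAt_q1 (dA2 p)).ofReal_comp
  have HD2 : HasDerivAt (fun s => Dc2 A2 ψ1 (s, p.2))
      (q1 (q2 ψ1) p + (Complex.I * (Complex.ofReal (q1 A2 p)) * ψ1 p + Complex.I * (A2 p : ℂ) * q1 ψ1 p))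
      p.1 := by
    simp only [Dc2]
    exact H1q2.add ((H1A2.const_mul Complex.I).mul H1ψ1)
  have K1 : HasDerivAt (fun s => ((starRingEnd ℂ) (Dc2 A2 ψ1 (s, p.2)) * ψ1 (s, p.2)).im)
      (((starRingEnd ℂ) (q1 (q2 ψ1) p + (Complex.I * (Complex.ofReal (q1 A2 p)) * ψ1 p
          + Complex.I * (A2 p : ℂ) * q1 ψ1 p)) * ψ1 p
        + (starRingEnd ℂ) (Dc2 A2 ψ1 p) * q1 ψ1 p).im) p.1 := by
    have := Complex.imCLM.hasFDerivAt.comp_hasDerivAt p.1 (HD2.star.mul H1ψ1)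
    simpa only [Function.comp_def, Complex.star_def, Complex.imCLM_apply, Pi.mul_apply, Prod.mk.eta] using this
  have e1 : q1 (fun q => ((starRingEnd ℂ) (Dc2 A2 ψ1 q) * ψ1 q).im) p
      = ((starRingEnd ℂ) (q1 (q2 ψ1) p + (Complex.I * (Complex.ofReal (q1 A2 p)) * ψ1 p
          + Complex.I * (A2 p : ℂ) * q1 ψ1 p)) * ψ1 p
        + (starRingEnd ℂ) (Dc2 A2 ψ1 p) * q1 ψ1 p).im := K1.deriv
  -- direction 2 building blocks
  have H2ψ1 : HasDerivAt (fun s => ψ1 (p.1, s)) (q2 ψ1 p) p.2 := hasDerivAt_q2 (dψ1 p)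
  have H2q1 : HasDerivAt (fun s => q1 ψ1 (p.1, s)) (q2 (q1 ψ1) p) p.2 :=
    hasDerivAt_q2 (dq1ψ1 p)
  have H2A1 : HasDerivAt (fun s : ℝ => ((A1 (p.1, s) : ℝ) : ℂ)) ((Complex.ofReal (q2 A1 p))) p.2 :=
    (hasDerivAt_q2 (dA1 p)).ofReal_comp
  have HD1 : HasDerivAt (fun s => Dc1 A1 ψ1 (p.1, s))
      (q2 (q1 ψ1) p + (Complex.I * (Complex.ofReal (q2 A1 p)) * ψ1 p + Complex.I * (A1 p : ℂ) * q2 ψ1 p))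
      p.2 := by
    simp only [Dc1]
    exact H2q1.add ((H2A1.const_mul Complex.I).mul H2ψ1)
  have K2 : HasDerivAt (fun s => ((starRingEnd ℂ) (Dc1 A1 ψ1 (p.1, s)) * ψ1 (p.1, s)).im)
      (((starRingEnd ℂ) (q2 (q1 ψ1) p + (Complex.I * (Complex.ofReal (q2 A1 p)) * ψ1 p
          + Complex.I * (A1 p : ℂ) * q2 ψ1 p)) * ψ1 p
        + (starRingEnd ℂ) (Dc1 A1 ψ1 p) * q2 ψ1 p).im) p.2 := by
    have := Complex.imCLM.hasFDerivAt.comp_hasDerivAt p.2 (HD1.star.mul H2ψ1)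
    simpa only [Function.comp_def, Complex.star_def, Complex.imCLM_apply, Pi.mul_apply, Prod.mk.eta] using this
  have e2 : q2 (fun q => ((starRingEnd ℂ) (Dc1 A1 ψ1 q) * ψ1 q).im) p
      = ((starRingEnd ℂ) (q2 (q1 ψ1) p + (Complex.I * (Complex.ofReal (q2 A1 p)) * ψ1 p
          + Complex.I * (A1 p : ℂ) * q2 ψ1 p)) * ψ1 p
        + (starRingEnd ℂ) (Dc1 A1 ψ1 p) * q2 ψ1 p).im := K2.deriv
  rw [e1, e2, hcomp p, q1_q2_comm hψ1 p]
  simp only [Dc1, Dc2, curvF]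
  simp only [map_add, map_mul, Complex.conj_I, Complex.conj_ofReal, Complex.normSq_apply,
    Complex.add_im, Complex.add_re, Complex.sub_im, Complex.sub_re, Complex.mul_im,
    Complex.mul_re, Complex.I_re, Complex.I_im, Complex.ofReal_re, Complex.ofReal_im,
    Complex.conj_re, Complex.conj_im, Complex.neg_re, Complex.neg_im]
  ring
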